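/- Let Q_n be the generator of the symmetric exclusion process on the complete graph K_n with rate α, and R_n the generator of a symmetric exclusion process on a graph G_n with V(G_n) = V(K_n), maximum degree d, and rate β. Fix ℓ ≤ ⌊n/2⌋, and let {ψ_i} with eigenvalues {λ_i} be an orthonormal eigenbasis of -Q_n^(ℓ), and {χ_i} with eigenvalues {μ_i} an orthonormal eigenbasis of -R_n^(ℓ). Then for any k > 0 and k' ≥ 1 with α k'(n - k' + 1) ≥ k, span{ψ_i : λ_i ≤ k} ⊆ span{χ_i : μ_i ≤ 2 β k' d}. -/

import Mathlib

open Finset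

/-- Swap the values of a configuration at two vertices. -/
def swapAt {V : Type*} [DecidableEq V] (x : V → Bool) (u v : V) : V → Bool :=
  fun w => if w = u then x v else if w = v then x u else x w

/-- Number of black marbles (`true` coordinates) of a configuration. -/
def countB {V : Type*} [Fintype V] (x : V → Bool) : ℕ :=
  (Finset.univ.filter fun v => x v = true).card

/-- The negative generator `-Q` of the symmetric exclusion process on `G` with rate `α`:
`(-Qf)(x) = α Σ_{e ∈ E(G)} (f x - f x_e)`, written as half the sum over ordered adjacent pairs. -/
noncomputable def negGen {V : Type*} [Fintype V] [DecidableEq V] (G : SimpleGraph V) [DecidableRel G.Adj]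
    (α : ℝ) (f : (V → Bool) → ℝ) (x : V → Bool) : ℝ :=
  (α / 2) * ∑ u : V, ∑ v : V, if G.Adj u v then f x - f (swapAt x u v) else 0

/-- `ψ_+(x) = Σ_{v : x(v)=0} ψ(x_v)`, adding a black marble at `v`. -/
def plusOp {V : Type*} [Fintype V] [DecidableEq V] (ψ : (V → Bool) → ℝ) (x : V → Bool) : ℝ :=
  ∑ v ∈ Finset.univ.filter (fun v => x v = false), ψ (Function.update x v true)

/-- `ψ_-(x) = Σ_{v : x(v)=1} ψ(x_v)`, removing the black marble at `v`. -/
def minusOp {V : Type*} [Fintype V] [DecidableEq V] (ψ : (V → Bool) → ℝ) (x : V → Bool) : ℝ :=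
  ∑ v ∈ Finset.univ.filter (fun v => x v = true), ψ (Function.update x v false)

/-- Inner product at level `ℓ` with respect to the uniform measure on `ℓ`-subsets. -/
noncomputable def innerL {V : Type*} [Fintype V] [DecidableEq V] (ℓ : ℕ) (f g : (V → Bool) → ℝ) : ℝ :=
  (((Fintype.card V).choose ℓ : ℝ))⁻¹ *
    ∑ x ∈ Finset.univ.filter (fun x : V → Bool => countB x = ℓ), f x * g x

/-- Inner product on the full configuration space with respect to the uniform measure. -/
noncomputable def innerF {V : Type*} [Fintype V] [DecidableEq V] (f g : (V → Bool) → ℝ) : ℝ :=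
  ((2 : ℝ) ^ (Fintype.card V))⁻¹ * ∑ x : V → Bool, f x * g x

/-!
Write `-Q = negGen ⊤ α`, `-R = negGen G β`, `f₊ = plusOp f`, `f₋ = minusOp f` and `⟨·, ·⟩` for the
unnormalized dot product. On the complete graph, `-Q f = α j (n - j + 1) f - α (f₊)₋` at level `j`, and `-Q` commutes with
`f ↦ f₊`. Hence an eigenfunction `f` of `-Q` at level `j + 1` with eigenvalue
`λ < α (j + 1) (n - j)` is `g₋` for the eigenfunction `g = α (α (j + 1) (n - j) - λ)⁻¹ f₊` at
level `j`. Since `j (n - j + 1)` increases for `j ≤ n / 2`, a `ψ` with eigenvalue at most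
`α k' (n - k' + 1)` at level `ℓ` descends all the way to level `j = min k' ℓ`: `ψ = φ₋⋯₋`.

On the other side `-R` also commutes with `f ↦ f₊`, so for an eigenfunction `χ` of `-R` at level
`ℓ` with eigenvalue `μ`, `χ₊⋯₊` is an eigenfunction with eigenvalue `μ` at level `j`. The
Dirichlet form bound `⟨f, -R f⟩ ≤ 2 β j d ‖f‖²` at level `j` forces it to vanish when
`μ > 2 β k' d`. As `₋` is adjoint to `₊`, `⟨χ, ψ⟩ = ⟨χ₊⋯₊, φ⟩ = 0`, so the expansion of `ψ` in
the orthonormal basis `χ` of level `ℓ` only involves the `χ_t` with `μ_t ≤ 2 β k' d`.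
-/

section Swap

variable {V : Type*} [DecidableEq V]

theorem swapAt_eq_comp_swap (x : V → Bool) (u v : V) : swapAt x u v = x ∘ Equiv.swap u v := by
  funext w
  simp only [swapAt, Function.comp, Equiv.swap_apply_def]
  split_ifs <;> rfl

theorem swapAt_swapAt (x : V → Bool) (u v : V) : swapAt (swapAt x u v) u v = x := by
  funext w
  simp [swapAt_eq_comp_swap]

theorem swapAt_comm (x : V → Bool) (u v : V) : swapAt x u v = swapAt x v u := by
  rw [swapAt_eq_comp_swap, swapAt_eq_comp_swap, Equiv.swap_comm]

theorem swapAt_eq_self {x : V → Bool} {u v : V} (h : x u = x v) : swapAt x u v = x := by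
  funext w
  simp only [swapAt]
  split_ifs <;> simp_all

theorem update_update_eq_swapAt {x : V → Bool} {u v : V} (hu : x u = true) (hv : x v = false) :
    Function.update (Function.update x u false) v true = swapAt x u v := by
  funext w
  simp only [Function.update_apply, swapAt]
  split_ifs <;> simp_all

end Swap

section Counting

variable {V : Type*} [Fintype V]

theorem countB_add_card_filter_eq_false (x : V → Bool) :
    countB x + #(univ.filter (x · = false)) = Fintype.card V := by
  simpa [countB] using card_filter_add_card_filter_not (s := univ) (x · = true)

theorem sum_adj_ne_le (G : SimpleGraph V) [DecidableRel G.Adj] {d : ℕ}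
    (hd : ∀ v, G.degree v ≤ d) (x : V → Bool) :
    ∑ u, ∑ v, (if G.Adj u v ∧ x u ≠ x v then (1 : ℝ) else 0) ≤ 2 * countB x * d := by
  have hblack : ∑ u, ∑ v, (if G.Adj u v ∧ x u = true then (1 : ℝ) else 0) ≤ countB x * d := by
    calc ∑ u, ∑ v, (if G.Adj u v ∧ x u = true then (1 : ℝ) else 0)
        = ∑ u ∈ univ.filter (x · = true), (G.degree u : ℝ) := by
          simp [and_comm, ite_and, sum_filter, ← SimpleGraph.card_neighborFinset_eq_degree,
            SimpleGraph.neighborFinset_eq_filter]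
      _ ≤ ∑ u ∈ univ.filter (x · = true), (d : ℝ) := sum_le_sum fun u _ => by exact_mod_cast hd u
      _ = countB x * d := by rw [sum_const, nsmul_eq_mul]; rfl
  calc ∑ u, ∑ v, (if G.Adj u v ∧ x u ≠ x v then (1 : ℝ) else 0)
      ≤ ∑ u, ∑ v, ((if G.Adj u v ∧ x u = true then (1 : ℝ) else 0) +
          (if G.Adj v u ∧ x v = true then 1 else 0)) := by
        gcongr with u _ v _
        by_cases h : G.Adj u v <;> cases x u <;> cases x v <;> simp [h, G.adj_comm v u]
    _ = 2 * ∑ u, ∑ v, (if G.Adj u v ∧ x u = true then (1 : ℝ) else 0) := by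
        simp only [sum_add_distrib]
        rw [sum_comm (f := fun u v => if G.Adj v u ∧ x v = true then (1 : ℝ) else 0), two_mul]
    _ ≤ 2 * countB x * d := by linarith

def SupportedOnLevel (j : ℕ) (f : (V → Bool) → ℝ) : Prop :=
  ∀ x, countB x ≠ j → f x = 0

theorem SupportedOnLevel.smul {j : ℕ} {f : (V → Bool) → ℝ}
    (hf : SupportedOnLevel j f) (c : ℝ) : SupportedOnLevel j (c • f) := fun x hx => by
  simp [hf x hx]

end Counting

section Configurations

variable {V : Type*} [Fintype V] [DecidableEq V]

theorem countB_swapAt (x : V → Bool) (u v : V) : countB (swapAt x u v) = countB x := by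
  rw [swapAt_eq_comp_swap, countB, countB]
  apply card_nbij' (Equiv.swap u v) (Equiv.swap u v) <;>
    simp [Set.MapsTo, Set.LeftInvOn, Set.RightInvOn]

theorem countB_update_true {x : V → Bool} {v : V} (h : x v = false) :
    countB (Function.update x v true) = countB x + 1 := by
  rw [countB, countB,
    ← card_insert_of_notMem (s := univ.filter (x · = true)) (a := v) (by simp [h])]
  congr 1
  ext w
  rcases eq_or_ne w v with rfl | hw <;> simp [*]

theorem card_filter_countB_eq (j : ℕ) :
    #(univ.filter fun x : V → Bool => countB x = j) = (Fintype.card V).choose j := by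
  rw [← card_univ (α := V), ← card_powersetCard]
  refine card_nbij' (fun x => univ.filter (x · = true)) (fun s v => decide (v ∈ s)) ?_ ?_ ?_ ?_
  · intro x hx
    rw [mem_coe, mem_filter] at hx
    exact mem_powersetCard.mpr ⟨subset_univ _, hx.2⟩
  · intro s hs
    rw [mem_coe, mem_filter]
    simpa [mem_powersetCard, countB] using hs
  · intro x _
    funext v
    simp
  · intro s _
    ext v
    simp

end Configurations

section Operators

variable {V : Type*} [Fintype V] [DecidableEq V]

noncomputable def negGenLin (G : SimpleGraph V) [DecidableRel G.Adj] (β : ℝ) :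
    Module.End ℝ ((V → Bool) → ℝ) where
  toFun := negGen G β
  map_add' f g := by
    funext x
    simp only [negGen, Pi.add_apply, ← mul_add, ← sum_add_distrib]
    congr 1
    refine sum_congr rfl fun u _ => sum_congr rfl fun v _ => ?_
    split_ifs <;> ring
  map_smul' c f := by
    funext x
    simp only [negGen, Pi.smul_apply, smul_eq_mul, RingHom.id_apply, mul_sum]
    refine sum_congr rfl fun u _ => sum_congr rfl fun v _ => ?_
    split_ifs <;> ring

def plusOpLin : Module.End ℝ ((V → Bool) → ℝ) where
  toFun := plusOp
  map_add' f g := by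
    funext x
    simp [plusOp, sum_add_distrib]
  map_smul' c f := by
    funext x
    simp [plusOp, mul_sum]

def minusOpLin : Module.End ℝ ((V → Bool) → ℝ) where
  toFun := minusOp
  map_add' f g := by
    funext x
    simp [minusOp, sum_add_distrib]
  map_smul' c f := by
    funext x
    simp [minusOp, mul_sum]

@[simp] theorem negGenLin_apply (G : SimpleGraph V) [DecidableRel G.Adj] (β : ℝ)
    (f : (V → Bool) → ℝ) : negGenLin G β f = negGen G β f := rfl

@[simp] theorem plusOpLin_apply (f : (V → Bool) → ℝ) : plusOpLin f = plusOp f := rfl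

@[simp] theorem minusOpLin_apply (f : (V → Bool) → ℝ) : minusOpLin f = minusOp f := rfl

namespace SupportedOnLevel

variable {j : ℕ} {f : (V → Bool) → ℝ}

theorem negGen (hf : SupportedOnLevel j f) (G : SimpleGraph V) [DecidableRel G.Adj] (β : ℝ) :
    SupportedOnLevel j (negGen G β f) := fun x hx => by
  have hswap : ∀ u v, f (swapAt x u v) = 0 := fun u v => hf _ (by rwa [countB_swapAt])
  simp [_root_.negGen, hf x hx, hswap]

theorem plusOp (hf : SupportedOnLevel (j + 1) f) : SupportedOnLevel j (plusOp f) := fun x hx =>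
  sum_eq_zero fun v hv => hf _ <| by
    rw [countB_update_true (mem_filter.mp hv).2]
    omega

theorem plusOp_pow {m : ℕ} (hf : SupportedOnLevel (j + m) f) :
    SupportedOnLevel j ((plusOpLin ^ m) f) := by
  induction m generalizing j with
  | zero => simpa using hf
  | succ m ih =>
    rw [pow_succ', Module.End.mul_apply]
    exact (ih (j := j + 1) (by rwa [add_right_comm, add_assoc])).plusOp

theorem negGenLin_eq_smul (hf : SupportedOnLevel j f) {G : SimpleGraph V} [DecidableRel G.Adj]
    {β μ : ℝ} (heig : ∀ x, countB x = j → _root_.negGen G β f x = μ * f x) :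
    negGenLin G β f = μ • f := by
  funext x
  by_cases hx : countB x = j
  · exact heig x hx
  · simp [(hf.negGen G β) x hx, hf x hx]

end SupportedOnLevel

theorem dotProduct_minusOp (f g : (V → Bool) → ℝ) : minusOp f ⬝ᵥ g = f ⬝ᵥ plusOp g := by
  simp only [dotProduct, minusOp, plusOp, sum_mul, mul_sum, sum_filter, ite_mul, mul_ite, zero_mul,
    mul_zero]
  rw [sum_comm]
  conv_rhs => rw [sum_comm]
  refine sum_congr rfl fun w _ => ?_
  rw [← sum_filter, ← sum_filter]
  refine sum_nbij' (Function.update · w false) (Function.update · w true) ?_ ?_ ?_ ?_ ?_ <;>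
    intro x hx <;> rw [mem_filter] at hx <;> simp [← hx.2]

theorem dotProduct_minusOp_pow (m : ℕ) (f g : (V → Bool) → ℝ) :
    (minusOpLin ^ m) f ⬝ᵥ g = f ⬝ᵥ (plusOpLin ^ m) g := by
  induction m generalizing f with
  | zero => rfl
  | succ m ih =>
    rw [pow_succ, Module.End.mul_apply, ih, pow_succ', Module.End.mul_apply]
    exact dotProduct_minusOp _ _

theorem plusOp_swapAt (f : (V → Bool) → ℝ) (x : V → Bool) (u v : V) :
    plusOp f (swapAt x u v) =
      ∑ w ∈ univ.filter (x · = false), f (swapAt (Function.update x w true) u v) := by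
  simp only [plusOp, swapAt_eq_comp_swap]
  refine sum_equiv (Equiv.swap u v) (by simp) fun w _ => ?_
  rw [Function.update_comp_equiv, Equiv.symm_swap, Equiv.swap_apply_self]

theorem negGen_plusOp (G : SimpleGraph V) [DecidableRel G.Adj] (β : ℝ) (f : (V → Bool) → ℝ) :
    negGen G β (plusOp f) = plusOp (negGen G β f) := by
  funext x
  simp only [negGen, plusOp_swapAt]
  simp only [plusOp, negGen, ← mul_sum]
  congr 1
  conv_rhs => rw [sum_comm]
  refine sum_congr rfl fun u _ => ?_
  conv_rhs => rw [sum_comm]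
  refine sum_congr rfl fun v _ => ?_
  split_ifs
  · rw [sum_sub_distrib]
  · rw [sum_const_zero]

theorem commute_negGenLin_plusOpLin (G : SimpleGraph V) [DecidableRel G.Adj] (β : ℝ) :
    Commute (negGenLin G β) plusOpLin :=
  LinearMap.ext (negGen_plusOp G β)

end Operators

section CompleteGraph

variable {V : Type*} [Fintype V] [DecidableEq V]

theorem minusOp_plusOp_apply (f : (V → Bool) → ℝ) (x : V → Bool) :
    minusOp (plusOp f) x = countB x * f x +
      ∑ u ∈ univ.filter (x · = true), ∑ v ∈ univ.filter (x · = false), f (swapAt x u v) := by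
  have hstep : ∀ u ∈ univ.filter (x · = true), plusOp f (Function.update x u false) =
      f x + ∑ v ∈ univ.filter (x · = false), f (swapAt x u v) := by
    intro u hu
    rw [mem_filter] at hu
    have hwhite : univ.filter (Function.update x u false · = false) =
        insert u (univ.filter (x · = false)) := by
      ext v
      rcases eq_or_ne v u with rfl | hv <;> simp [*]
    rw [plusOp, hwhite, sum_insert (by simp [hu.2])]
    congr 1
    · rw [Function.update_idem, ← hu.2, Function.update_eq_self]
    · exact sum_congr rfl fun v hv => by rw [update_update_eq_swapAt hu.2 (mem_filter.mp hv).2]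
  rw [minusOp, sum_congr rfl hstep, sum_add_distrib, sum_const, nsmul_eq_mul]
  rfl

theorem sum_top_adj_eq_two_mul (x : V → Bool) (D : V → V → ℝ) (hsymm : ∀ u v, D u v = D v u)
    (hdiag : ∀ u v, x u = x v → D u v = 0) :
    ∑ u, ∑ v, (if (⊤ : SimpleGraph V).Adj u v then D u v else 0) =
      2 * ∑ u ∈ univ.filter (x · = true), ∑ v ∈ univ.filter (x · = false), D u v := by
  have hsplit : ∀ u v, (if (⊤ : SimpleGraph V).Adj u v then D u v else 0) =
      (if x u = true ∧ x v = false then D u v else 0) +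
        (if x v = true ∧ x u = false then D v u else 0) := by
    intro u v
    rw [hsymm v u]
    by_cases h : x u = x v
    · simp [h, hdiag u v h]
    · have hne : u ≠ v := fun huv => h (huv ▸ rfl)
      cases hu : x u <;> cases hv : x v <;> simp_all
  simp only [hsplit, sum_add_distrib]
  rw [sum_comm (f := fun u v => if x v = true ∧ x u = false then D v u else 0), two_mul]
  simp only [sum_filter, ite_and, sum_ite_irrel, sum_const_zero]

theorem negGen_top_apply (α : ℝ) (f : (V → Bool) → ℝ) (x : V → Bool) :
    negGen ⊤ α f x = α * (countB x * (Fintype.card V - countB x : ℝ) * f x -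
      ∑ u ∈ univ.filter (x · = true), ∑ v ∈ univ.filter (x · = false), f (swapAt x u v)) := by
  have h := sum_top_adj_eq_two_mul x (fun u v => f x - f (swapAt x u v))
    (fun u v => by rw [swapAt_comm]) (fun u v huv => by rw [swapAt_eq_self huv, sub_self])
  have hwhite := countB_add_card_filter_eq_false x
  rw [negGen, h]
  simp only [sum_sub_distrib, sum_const, nsmul_eq_mul, ← hwhite, Nat.cast_add, countB]
  ring

theorem negGen_top_add_minusOp_plusOp (α : ℝ) (f : (V → Bool) → ℝ) (x : V → Bool) :
    negGen ⊤ α f x + α * minusOp (plusOp f) x =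
      α * (countB x * (Fintype.card V - countB x + 1)) * f x := by
  rw [negGen_top_apply, minusOp_plusOp_apply]
  ring

theorem exists_minusOp_eq_of_negGen_top_eq_smul {α lam : ℝ} {j : ℕ} {f : (V → Bool) → ℝ}
    (hf : SupportedOnLevel (j + 1) f) (heig : negGenLin ⊤ α f = lam • f)
    (hlam : lam < α * ((j + 1) * (Fintype.card V - j))) :
    ∃ g, SupportedOnLevel j g ∧ negGenLin ⊤ α g = lam • g ∧ minusOpLin g = f := by
  set c := α * ((j + 1) * (Fintype.card V - j)) - lam
  have hc : 0 < c := sub_pos.mpr hlam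
  have hMf : α • minusOpLin (plusOpLin f) = c • f := by
    funext x
    have h := negGen_top_add_minusOp_plusOp α f x
    rw [show negGen ⊤ α f x = lam * f x from congr_fun heig x] at h
    simp only [Pi.smul_apply, smul_eq_mul, minusOpLin_apply, plusOpLin_apply, c]
    by_cases hx : countB x = j + 1
    · rw [hx] at h
      push_cast at h
      linarith
    · rw [hf x hx] at h ⊢
      linarith
  refine ⟨(α / c) • plusOpLin f, hf.plusOp.smul _, ?_, ?_⟩
  · rw [map_smul, ← Module.End.mul_apply, (commute_negGenLin_plusOpLin ⊤ α).eq,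
      Module.End.mul_apply, heig, map_smul, smul_comm]
  · rw [map_smul, div_eq_inv_mul, mul_smul, hMf, smul_smul, inv_mul_cancel₀ hc.ne', one_smul]

theorem mem_range_minusOp_pow_of_negGen_top_eq_smul {α lam : ℝ} {j m : ℕ} {f : (V → Bool) → ℝ}
    (hf : SupportedOnLevel (j + m) f) (heig : negGenLin ⊤ α f = lam • f)
    (hlam : ∀ i : ℕ, j ≤ i → i < j + m → lam < α * ((i + 1) * (Fintype.card V - i))) :
    f ∈ LinearMap.range (minusOpLin ^ m) := by
  induction m generalizing f with
  | zero => exact ⟨f, rfl⟩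
  | succ m ih =>
    obtain ⟨g, hg, hgeig, rfl⟩ :=
      exists_minusOp_eq_of_negGen_top_eq_smul hf heig (hlam (j + m) (by omega) (by omega))
    obtain ⟨φ, rfl⟩ := ih hg hgeig fun i hi hi' => hlam i hi (by omega)
    exact ⟨φ, by rw [pow_succ', Module.End.mul_apply]⟩

end CompleteGraph

section Dirichlet

variable {V : Type*} [Fintype V] [DecidableEq V]

theorem sum_mul_sub_swapAt_le (f : (V → Bool) → ℝ) (u v : V) :
    ∑ x, f x * (f x - f (swapAt x u v)) ≤ 2 * ∑ x, if x u ≠ x v then f x ^ 2 else 0 := by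
  have hreindex : ∑ x, (if x u ≠ x v then f (swapAt x u v) ^ 2 else 0) =
      ∑ x, if x u ≠ x v then f x ^ 2 else 0 := by
    refine sum_nbij' (swapAt · u v) (swapAt · u v) (by simp) (by simp)
      (fun x _ => swapAt_swapAt x u v) (fun x _ => swapAt_swapAt x u v) fun x _ => ?_
    simp [swapAt_eq_comp_swap, ne_comm]
  calc ∑ x, f x * (f x - f (swapAt x u v))
      ≤ ∑ x, (3 / 2 * (if x u ≠ x v then f x ^ 2 else 0) +
          1 / 2 * (if x u ≠ x v then f (swapAt x u v) ^ 2 else 0)) := by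
        gcongr with x _
        by_cases h : x u = x v
        · simp [h, swapAt_eq_self h]
        · simp only [h, ne_eq, not_false_eq_true, if_true]
          nlinarith [sq_nonneg (f x + f (swapAt x u v))]
    _ = 2 * ∑ x, if x u ≠ x v then f x ^ 2 else 0 := by
        rw [sum_add_distrib, ← mul_sum, ← mul_sum, hreindex]
        ring

theorem dotProduct_negGen_le (G : SimpleGraph V) [DecidableRel G.Adj] {β : ℝ} (hβ : 0 ≤ β)
    {d : ℕ} (hd : ∀ v, G.degree v ≤ d) {j : ℕ} {f : (V → Bool) → ℝ}
    (hf : SupportedOnLevel j f) :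
    f ⬝ᵥ negGen G β f ≤ 2 * β * j * d * (f ⬝ᵥ f) := by
  have hpair : ∀ u v, ∑ x, f x * (if G.Adj u v then f x - f (swapAt x u v) else 0) ≤
      2 * ∑ x, f x ^ 2 * (if G.Adj u v ∧ x u ≠ x v then 1 else 0) := by
    intro u v
    by_cases h : G.Adj u v
    · simpa [h] using sum_mul_sub_swapAt_le f u v
    · simp [h]
  have hlevel : ∀ x, f x ^ 2 * ∑ u, ∑ v, (if G.Adj u v ∧ x u ≠ x v then (1 : ℝ) else 0) ≤
      f x ^ 2 * (2 * j * d) := by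
    intro x
    by_cases hx : countB x = j
    · exact mul_le_mul_of_nonneg_left (hx ▸ sum_adj_ne_le G hd x) (sq_nonneg _)
    · simp [hf x hx]
  calc f ⬝ᵥ negGen G β f
      = β / 2 * ∑ u, ∑ v, ∑ x, f x * (if G.Adj u v then f x - f (swapAt x u v) else 0) := by
        simp only [dotProduct, negGen, mul_sum]
        rw [sum_comm]
        refine sum_congr rfl fun u _ => ?_
        rw [sum_comm]
        exact sum_congr rfl fun v _ => sum_congr rfl fun x _ => by ring
    _ ≤ β / 2 * ∑ u, ∑ v, 2 * ∑ x, f x ^ 2 * (if G.Adj u v ∧ x u ≠ x v then 1 else 0) := by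
        gcongr with u _ v _
        exact hpair u v
    _ = β * ∑ x, f x ^ 2 * ∑ u, ∑ v, (if G.Adj u v ∧ x u ≠ x v then (1 : ℝ) else 0) := by
        simp only [mul_sum]
        conv_rhs => rw [sum_comm]
        refine sum_congr rfl fun u _ => ?_
        conv_rhs => rw [sum_comm]
        exact sum_congr rfl fun v _ => sum_congr rfl fun x _ => by ring
    _ ≤ β * ∑ x, f x ^ 2 * (2 * j * d) :=
        mul_le_mul_of_nonneg_left (sum_le_sum fun x _ => hlevel x) hβ
    _ = 2 * β * j * d * (f ⬝ᵥ f) := by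
        simp only [dotProduct, mul_sum]
        exact sum_congr rfl fun x _ => by ring

end Dirichlet

section Spectral

variable {V : Type*} [Fintype V] [DecidableEq V] (G : SimpleGraph V) [DecidableRel G.Adj]

theorem eq_zero_of_negGenLin_eq_smul {β : ℝ} (hβ : 0 ≤ β) {d : ℕ} (hd : ∀ v, G.degree v ≤ d)
    {j : ℕ} {f : (V → Bool) → ℝ} (hf : SupportedOnLevel j f) {μ : ℝ} (heig : negGenLin G β f = μ • f) (hμ : 2 * β * j * d < μ) : f = 0 := by
  have hbound := dotProduct_negGen_le G hβ hd hf
  rw [← negGenLin_apply, heig, dotProduct_smul, smul_eq_mul] at hbound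
  have hnonneg : 0 ≤ f ⬝ᵥ f := sum_nonneg fun x _ => mul_self_nonneg (f x)
  exact dotProduct_self_eq_zero.mp (by nlinarith)

theorem dotProduct_eq_zero_of_mem_range_minusOp_pow {β : ℝ} (hβ : 0 ≤ β) {d : ℕ}
    (hd : ∀ v, G.degree v ≤ d) {j m : ℕ} {χ : (V → Bool) → ℝ}
    (hχ : SupportedOnLevel (j + m) χ) {μ : ℝ} (heig : negGenLin G β χ = μ • χ)
    (hμ : 2 * β * j * d < μ) {f : (V → Bool) → ℝ} (hf : f ∈ LinearMap.range (minusOpLin ^ m)) :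
    χ ⬝ᵥ f = 0 := by
  obtain ⟨φ, rfl⟩ := hf
  have hplus : (plusOpLin ^ m) χ = 0 := by
    refine eq_zero_of_negGenLin_eq_smul G hβ hd hχ.plusOp_pow ?_ hμ
    rw [← Module.End.mul_apply, ((commute_negGenLin_plusOpLin G β).pow_right m).eq,
      Module.End.mul_apply, heig, map_smul]
  rw [dotProduct_comm, dotProduct_minusOp_pow, hplus, dotProduct_zero]

end Spectral

section Expansion

variable {V : Type*} [Fintype V] [DecidableEq V]

theorem innerL_eq_inv_mul_dotProduct {ℓ : ℕ} {f : (V → Bool) → ℝ} (hf : SupportedOnLevel ℓ f)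
    (g : (V → Bool) → ℝ) : innerL ℓ f g = ((Fintype.card V).choose ℓ : ℝ)⁻¹ * f ⬝ᵥ g := by
  rw [innerL, dotProduct, sum_filter_of_ne fun x _ hx => ?_]
  by_contra h
  simp [hf x h] at hx

theorem eq_sum_innerL_smul {ι : Type*} [Fintype ι] [DecidableEq ι] {ℓ : ℕ} {χ : ι → (V → Bool) → ℝ}
    (hχ : ∀ t, SupportedOnLevel ℓ (χ t))
    (horth : ∀ s t, innerL ℓ (χ s) (χ t) = if s = t then 1 else 0)
    (hcard : Fintype.card ι = (Fintype.card V).choose ℓ) {f : (V → Bool) → ℝ}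
    (hf : SupportedOnLevel ℓ f) : f = ∑ t, innerL ℓ (χ t) f • χ t := by
  set S := univ.filter fun x : V → Bool => countB x = ℓ
  let restrict : ((V → Bool) → ℝ) → EuclideanSpace ℝ S := fun g => WithLp.toLp 2 fun z => g z
  have hinner : ∀ g h, inner ℝ (restrict g) (restrict h) = ∑ x ∈ S, g x * h x := by
    intro g h
    simp only [restrict, PiLp.inner_apply, RCLike.inner_apply, conj_trivial]
    exact (sum_attach S fun x => h x * g x).trans (sum_congr rfl fun x _ => mul_comm _ _)
  set s := √((Fintype.card V).choose ℓ : ℝ)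
  have hs : s * s = (Fintype.card V).choose ℓ := Real.mul_self_sqrt (Nat.cast_nonneg _)
  let u : ι → EuclideanSpace ℝ S := fun t => s⁻¹ • restrict (χ t)
  have hu : Orthonormal ℝ u := by
    rw [orthonormal_iff_ite]
    intro t t'
    rw [← horth, innerL]
    simp only [u, real_inner_smul_left, real_inner_smul_right, hinner, ← mul_assoc, ← mul_inv, hs]
    rfl
  have hspan := hu.linearIndependent.span_eq_top_of_card_eq_finrank'
    (by rw [finrank_euclideanSpace, hcard, Fintype.card_coe, card_filter_countB_eq])
  have hrepr := (OrthonormalBasis.mk hu hspan.ge).sum_repr' (restrict f)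
  funext x
  by_cases hx : x ∈ S
  · have := congrArg (fun w => w ⟨x, hx⟩) hrepr
    simp only [OrthonormalBasis.coe_mk, real_inner_smul_left, hinner, WithLp.ofLp_sum,
      WithLp.ofLp_smul, Finset.sum_apply, Pi.smul_apply, smul_eq_mul, u, restrict] at this
    rw [← this, Finset.sum_apply]
    refine sum_congr rfl fun t _ => ?_
    rw [Pi.smul_apply, smul_eq_mul, innerL, ← hs, mul_inv]
    ring
  · have hx' : countB x ≠ ℓ := by simpa [S] using hx
    simp [hf x hx', hχ _ x hx']

end Expansion

-- `(i + 1) (n - i) - a (n - a + 1) = (i + 1 - a) (n - i - a)`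
theorem natCast_mul_sub_add_one_lt {n a i : ℕ} (ha : a ≤ i) (hn : i + a < n) :
    (a : ℝ) * (n - a + 1) < (i + 1) * (n - i) := by
  have h1 : (a : ℝ) ≤ i := by exact_mod_cast ha
  have h2 : (i : ℝ) + a + 1 ≤ n := by exact_mod_cast hn
  nlinarith

theorem spectral_span_containment_general (n : ℕ) (G : SimpleGraph (Fin n)) [DecidableRel G.Adj]
    (d : ℕ) (hd : ∀ v, G.degree v ≤ d)
    (α β : ℝ) (hα : 0 < α) (hβ : 0 < β)
    (ℓ : ℕ) (hℓ : 2 * ℓ ≤ n)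
    (ψ χ : Fin (n.choose ℓ) → (Fin n → Bool) → ℝ)
    (lam mu : Fin (n.choose ℓ) → ℝ)
    (hψsupp : ∀ i x, countB x ≠ ℓ → ψ i x = 0)
    (hχsupp : ∀ i x, countB x ≠ ℓ → χ i x = 0)
    (heigψ : ∀ i x, countB x = ℓ →
      negGen (⊤ : SimpleGraph (Fin n)) α (ψ i) x = lam i * ψ i x)
    (heigχ : ∀ i x, countB x = ℓ → negGen G β (χ i) x = mu i * χ i x)
    (horthχ : ∀ i j, innerL ℓ (χ i) (χ j) = if i = j then 1 else 0)
    (k : ℝ) (k' : ℕ)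
    (hkk' : k ≤ α * k' * ((n : ℝ) - k' + 1)) :
    Submodule.span ℝ {g | ∃ i, lam i ≤ k ∧ g = ψ i}
      ≤ Submodule.span ℝ {g | ∃ i, mu i ≤ 2 * β * k' * d ∧ g = χ i} := by
  refine Submodule.span_le.mpr ?_
  rintro _ ⟨i, hi, rfl⟩
  set j := min k' ℓ
  have hjℓ : j + (ℓ - j) = ℓ := Nat.add_sub_cancel' (min_le_right _ _)
  have hψℓ : SupportedOnLevel (j + (ℓ - j)) (ψ i) := by rw [hjℓ]; exact hψsupp i
  have hχℓ : ∀ t, SupportedOnLevel (j + (ℓ - j)) (χ t) := by rw [hjℓ]; exact hχsupp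
  have hψ : ψ i ∈ LinearMap.range (minusOpLin ^ (ℓ - j)) := by
    refine mem_range_minusOp_pow_of_negGen_top_eq_smul hψℓ
      (SupportedOnLevel.negGenLin_eq_smul (hψsupp i) (heigψ i)) fun i' hi' hi'' => ?_
    rw [Fintype.card_fin]
    calc lam i ≤ α * (k' * (n - k' + 1)) := by linarith [mul_assoc α k' ((n : ℝ) - k' + 1)]
      _ < α * ((i' + 1) * (n - i')) :=
        mul_lt_mul_of_pos_left (natCast_mul_sub_add_one_lt (by omega) (by omega)) hα
  rw [eq_sum_innerL_smul hχsupp horthχ (by simp) (hψsupp i)]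
  refine Submodule.sum_mem _ fun t _ => ?_
  by_cases ht : mu t ≤ 2 * β * k' * d
  · exact Submodule.smul_mem _ _ (Submodule.subset_span ⟨t, ht, rfl⟩)
  · have hμ : 2 * β * j * d < mu t := by
      have : 2 * β * j * d ≤ 2 * β * k' * d := by gcongr; exact min_le_left _ _
      linarith
    rw [innerL_eq_inv_mul_dotProduct (hχsupp t), dotProduct_eq_zero_of_mem_range_minusOp_pow G
      hβ.le hd (hχℓ t) (SupportedOnLevel.negGenLin_eq_smul (hχsupp t) (heigχ t)) hμ hψ]
    simp

/-- Spectral span containment: low eigenvalue spaces of the complete-graph exclusion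
generator (rate α) at level ℓ ≤ ⌊n/2⌋ are contained in the span of eigenvectors of the
generator on G (rate β, maximum degree d) with eigenvalue at most 2βk'd, whenever
αk'(n-k'+1) ≥ k. -/
theorem spectral_span_containment (n : ℕ) (G : SimpleGraph (Fin n)) [DecidableRel G.Adj]
    (d : ℕ) (hd : ∀ v, G.degree v ≤ d)
    (α β : ℝ) (hα : 0 < α) (hβ : 0 < β)
    (ℓ : ℕ) (hℓ : 2 * ℓ ≤ n)
    (ψ χ : Fin (n.choose ℓ) → (Fin n → Bool) → ℝ)
    (lam mu : Fin (n.choose ℓ) → ℝ)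
    (hψsupp : ∀ i x, countB x ≠ ℓ → ψ i x = 0)
    (hχsupp : ∀ i x, countB x ≠ ℓ → χ i x = 0)
    (heigψ : ∀ i x, countB x = ℓ →
      negGen (⊤ : SimpleGraph (Fin n)) α (ψ i) x = lam i * ψ i x)
    (heigχ : ∀ i x, countB x = ℓ → negGen G β (χ i) x = mu i * χ i x)
    (horthψ : ∀ i j, innerL ℓ (ψ i) (ψ j) = if i = j then 1 else 0)
    (horthχ : ∀ i j, innerL ℓ (χ i) (χ j) = if i = j then 1 else 0)
    (k : ℝ) (hk : 0 < k) (k' : ℕ) (hk'1 : 1 ≤ k')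
    (hkk' : k ≤ α * k' * ((n : ℝ) - k' + 1)) :
    Submodule.span ℝ {g | ∃ i, lam i ≤ k ∧ g = ψ i}
      ≤ Submodule.span ℝ {g | ∃ i, mu i ≤ 2 * β * k' * d ∧ g = χ i} :=
  spectral_span_containment_general n G d hd α β hα hβ ℓ hℓ ψ χ lam mu hψsupp hχsupp heigψ heigχ
    horthχ k k' hkk'
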